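/- arXiv:1603.03393 — 3 statements merged into one kernel-verified Lean document; each statement's English description precedes it below -/
import Mathlib

section
/- For m ≠ 1 with 0 < m ≤ 2, the m-mean θ_m(s,t) = ((m−1)/m)·(s^m − t^m)/(s^(m−1) − t^(m−1)) for s ≠ t admits the integral representation θ_m(s,t) = ∫₀¹ ((1−α)s^(m−1) + α t^(m−1))^(1/(m−1)) dα for all s, t > 0. -/
/-! The integrand is `g(α)^p` with `p = 1/(m-1)` and `g` affine from `a = s^(m-1)` to `b = t^(m-1)`,
so the substitution `x = g(α)` turns the integral into `(b^(p+1) - a^(p+1)) / ((p+1)(b-a))`.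
Since `a^(p+1) = s^m`, `b^(p+1) = t^m` and `p+1 = m/(m-1)`, this is the defining quotient of `θ_m`. -/

/-- The `m`-mean for `m ≠ 1`, extended by continuity to the diagonal. -/
noncomputable def thetam (m s t : ℝ) : ℝ :=
  if s = t then s
  else ((m - 1) / m) * (s ^ m - t ^ m) / (s ^ (m - 1) - t ^ (m - 1))

open Real Set

theorem integral_affine_rpow {a b p : ℝ} (ha : 0 < a) (hb : 0 < b) (hab : a ≠ b) (hp : p ≠ -1) :
    ∫ α in (0:ℝ)..1, ((1 - α) * a + α * b) ^ p
      = (b ^ (p + 1) - a ^ (p + 1)) / ((p + 1) * (b - a)) := by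
  have hba : b - a ≠ 0 := sub_ne_zero.mpr hab.symm
  have hzero : (0 : ℝ) ∉ uIcc a b := fun h => (lt_min ha hb).not_ge h.1
  calc ∫ α in (0:ℝ)..1, ((1 - α) * a + α * b) ^ p
      = ∫ α in (0:ℝ)..1, ((b - a) * α + a) ^ p := by congr 1; ext α; ring_nf
    _ = (b - a)⁻¹ * ∫ x in a..b, x ^ p := by
      rw [intervalIntegral.integral_comp_mul_add (fun x => x ^ p) hba]; simp
    _ = (b ^ (p + 1) - a ^ (p + 1)) / ((p + 1) * (b - a)) := by
      rw [integral_rpow (Or.inr ⟨hp, hzero⟩)]; field_simp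

theorem rpow_sub_one_rpow_one_div_sub_one_add_one {s m : ℝ} (hs : 0 ≤ s) (hm1 : m ≠ 1) :
    (s ^ (m - 1)) ^ (1 / (m - 1) + 1) = s ^ m := by
  rw [← rpow_mul hs]
  congr 1
  field_simp [sub_ne_zero.mpr hm1]
  ring

theorem thetam_integral_repr_general (m s t : ℝ) (hm0 : 0 < m) (hm1 : m ≠ 1)
    (hs : 0 < s) (ht : 0 < t) :
    thetam m s t
      = ∫ α in (0:ℝ)..1, ((1 - α) * s ^ (m - 1) + α * t ^ (m - 1)) ^ (1 / (m - 1)) := by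
  have hm1' : m - 1 ≠ 0 := sub_ne_zero.mpr hm1
  rcases eq_or_ne s t with rfl | hst
  · have hconst : ∀ α : ℝ, (1 - α) * s ^ (m - 1) + α * s ^ (m - 1) = s ^ (m - 1) := fun α => by ring
    simp only [thetam, hconst, intervalIntegral.integral_const, ← rpow_mul hs.le,
      mul_one_div_cancel hm1', rpow_one]
    simp
  · have hst' : s ^ (m - 1) ≠ t ^ (m - 1) := fun h => hst <|
      (rpow_left_inj hs.le ht.le hm1').mp h
    have hp : 1 / (m - 1) ≠ -1 := by
      intro h
      field_simp at h
      linarith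
    rw [integral_affine_rpow (rpow_pos_of_pos hs _) (rpow_pos_of_pos ht _) hst' hp,
      rpow_sub_one_rpow_one_div_sub_one_add_one hs.le hm1,
      rpow_sub_one_rpow_one_div_sub_one_add_one ht.le hm1, thetam, if_neg hst]
    have hden : s ^ (m - 1) - t ^ (m - 1) ≠ 0 := sub_ne_zero.mpr hst'
    have hden' : t ^ (m - 1) - s ^ (m - 1) ≠ 0 := sub_ne_zero.mpr hst'.symm
    field_simp [hm0.ne']
    ring

/-- Integral representation of the `m`-mean for `m ∈ (0,2]`, `m ≠ 1`:
`θ_m(s,t) = ∫₀¹ ((1−α)s^(m−1) + α t^(m−1))^(1/(m−1)) dα` for all `s, t > 0`. -/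
theorem thetam_integral_repr (m s t : ℝ) (hm0 : 0 < m) (hm2 : m ≤ 2) (hm1 : m ≠ 1)
    (hs : 0 < s) (ht : 0 < t) :
    thetam m s t
      = ∫ α in (0:ℝ)..1, ((1 - α) * s ^ (m - 1) + α * t ^ (m - 1)) ^ (1 / (m - 1)) :=
  thetam_integral_repr_general m s t hm0 hm1 hs ht
end

section
/- For 0 < m ≤ 2, the m-mean θ_m is concave on [0,∞)². -/
/-!
Write `M_r(u; s, t) = (u s^r + (1 - u) t^r)^(1/r)` for the weighted power mean (the weighted
geometric mean `s^u t^(1-u)` when `r = 0`). Substituting `x = u s^r + (1 - u) t^r` (resp.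
`x = u log s + (1 - u) log t`) gives `θ_m(s, t) = ∫₀¹ M_{m-1}(u; s, t) du`, so it suffices that each
`M_r(u; ·, ·)` with `r ≤ 1` be concave on the closed quadrant. Being homogeneous of degree one,
`M_r(u; s, t) = s M_r(u; 1, t/s)` is the perspective of `t ↦ (u + (1 - u) t^r)^(1/r)`, whose second
derivative is `≤ 0` exactly when `r ≤ 1`; concavity then passes from the open quadrant to its
closure by continuity.
-/

open Real Set Filter Topology MeasureTheory

/-- The `m`-mean `θ_m : [0,∞)² → [0,∞)`, defined by
`θ_m(s,t) = (s−t)/(log s − log t)` if `m = 1` and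
`θ_m(s,t) = ((m−1)/m)(s^m − t^m)/(s^(m−1) − t^(m−1))` if `m ≠ 1` for `s ≠ t`,
extended by continuity to the diagonal and to the boundary of `[0,∞)²`. -/
noncomputable def theta (m s t : ℝ) : ℝ :=
  if s = t then s
  else if s = 0 ∨ t = 0 then (if 1 < m then ((m - 1) / m) * (s + t) else 0)
  else if m = 1 then (s - t) / (Real.log s - Real.log t)
  else ((m - 1) / m) * (s ^ m - t ^ m) / (s ^ (m - 1) - t ^ (m - 1))

theorem ConcaveOn.of_interior {E : Type*} [AddCommGroup E] [Module ℝ E] [TopologicalSpace E]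
    [IsTopologicalAddGroup E] [ContinuousSMul ℝ E] {C : Set E} {f : E → ℝ} (hC : Convex ℝ C)
    (hC₀ : (interior C).Nonempty) (hf : ConcaveOn ℝ (interior C) f) (hcont : ContinuousOn f C) :
    ConcaveOn ℝ C f := by
  obtain ⟨z, hz⟩ := hC₀
  -- Push every point slightly towards the interior point `z`, then let the push vanish.
  let push (x : E) (ε : ℝ) : E := (1 - ε) • x + ε • z
  have push_mem : ∀ x ∈ C, ∀ ε ∈ Ioo (0 : ℝ) 1, push x ε ∈ interior C := fun x hx ε hε =>
    hC.combo_self_interior_mem_interior hx hz (by linarith [hε.2]) hε.1 (by ring)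
  have tendsto_push : ∀ x ∈ C, Tendsto (fun ε => f (push x ε)) (𝓝[>] 0) (𝓝 (f x)) := by
    intro x hx
    refine (hcont x hx).tendsto.comp (tendsto_nhdsWithin_iff.2 ⟨?_, ?_⟩)
    · have : Continuous (push x) := by fun_prop
      simpa [push] using this.continuousWithinAt (s := Ioi 0) (x := 0) |>.tendsto
    · filter_upwards [Ioo_mem_nhdsGT zero_lt_one] with ε hε
      exact interior_subset (push_mem x hx ε hε)
  refine ⟨hC, fun x hx y hy a b ha hb hab => ?_⟩
  refine le_of_tendsto_of_tendsto (((tendsto_push x hx).const_smul a).add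
    ((tendsto_push y hy).const_smul b)) (tendsto_push _ (hC hx hy ha hb hab)) ?_
  filter_upwards [Ioo_mem_nhdsGT zero_lt_one] with ε hε
  convert hf.2 (push_mem x hx ε hε) (push_mem y hy ε hε) ha hb hab using 2
  obtain rfl : b = 1 - a := by linarith
  simp only [push]
  module

theorem ConcaveOn.perspective {h : ℝ → ℝ} (hh : ConcaveOn ℝ (Ioi 0) h) :
    ConcaveOn ℝ (Ioi 0 ×ˢ Ioi 0) (fun p : ℝ × ℝ => p.1 * h (p.2 / p.1)) := by
  refine ⟨(convex_Ioi 0).prod (convex_Ioi 0), ?_⟩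
  rintro ⟨x₁, x₂⟩ ⟨hx₁, hx₂⟩ ⟨y₁, y₂⟩ ⟨hy₁, hy₂⟩ a b ha hb hab
  simp only [mem_Ioi] at hx₁ hx₂ hy₁ hy₂
  simp only [Prod.smul_mk, Prod.mk_add_mk, smul_eq_mul]
  have hσ : 0 < a * x₁ + b * y₁ := by
    rcases ha.eq_or_lt with rfl | ha
    · simp_all
    · positivity
  have hcomb := hh.2 (div_pos hx₂ hx₁) (div_pos hy₂ hy₁)
    (div_nonneg (mul_nonneg ha hx₁.le) hσ.le) (div_nonneg (mul_nonneg hb hy₁.le) hσ.le)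
    (by field_simp)
  simp only [smul_eq_mul] at hcomb
  calc a * (x₁ * h (x₂ / x₁)) + b * (y₁ * h (y₂ / y₁))
      = (a * x₁ + b * y₁) * (a * x₁ / (a * x₁ + b * y₁) * h (x₂ / x₁)
          + b * y₁ / (a * x₁ + b * y₁) * h (y₂ / y₁)) := by field_simp
    _ ≤ (a * x₁ + b * y₁) * h ((a * x₂ + b * y₂) / (a * x₁ + b * y₁)) := by
        gcongr
        convert hcomb using 2
        field_simp

theorem concaveOn_add_mul_rpow_rpow_inv {u v r : ℝ} (hu : 0 < u) (hv : 0 < v) (hr : r ≤ 1)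
    (hr₀ : r ≠ 0) : ConcaveOn ℝ (Ioi 0) (fun t => (u + v * t ^ r) ^ r⁻¹) := by
  have base_pos : ∀ t : ℝ, 0 < t → 0 < u + v * t ^ r := fun t ht => by positivity
  -- Written this way, the derivative has a second derivative of evident sign.
  let f' (t : ℝ) : ℝ := v * (v + u * t ^ (-r)) ^ (r⁻¹ - 1)
  let f'' (t : ℝ) : ℝ := v * u * (r - 1) * (v + u * t ^ (-r)) ^ (r⁻¹ - 1 - 1) * t ^ (-r - 1)
  have hf' : ∀ t : ℝ, 0 < t → HasDerivAt (fun t => (u + v * t ^ r) ^ r⁻¹) (f' t) t := by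
    intro t ht
    refine ((hasDerivAt_rpow_const (p := r⁻¹) (Or.inl (base_pos t ht).ne')).comp t
      (((hasDerivAt_rpow_const (p := r) (Or.inl ht.ne')).const_mul v).const_add u)).congr_deriv ?_
    have hsplit : v + u * t ^ (-r) = t ^ (-r) * (u + v * t ^ r) := by
      rw [rpow_neg ht.le]
      field_simp
      ring
    simp only [f']
    rw [hsplit, mul_rpow (by positivity) (base_pos t ht).le, ← rpow_mul ht.le,
      show -r * (r⁻¹ - 1) = r - 1 by field_simp; ring]
    field_simp
  have hf'' : ∀ t : ℝ, 0 < t → HasDerivAt f' (f'' t) t := by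
    intro t ht
    have hpos : 0 < v + u * t ^ (-r) := by positivity
    refine (((hasDerivAt_rpow_const (p := r⁻¹ - 1) (Or.inl hpos.ne')).comp t
      (((hasDerivAt_rpow_const (p := -r) (Or.inl ht.ne')).const_mul u).const_add v)).const_mul
      v).congr_deriv ?_
    simp only [f'']
    field_simp
    ring
  refine concaveOn_of_hasDerivWithinAt2_nonpos (convex_Ioi 0)
    (fun t ht => (hf' t ht).continuousAt.continuousWithinAt) (f' := f') (f'' := f'')
    (fun t ht => (hf' t (interior_subset ht)).hasDerivWithinAt)
    (fun t ht => (hf'' t (interior_subset ht)).hasDerivWithinAt) fun t ht => ?_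
  have ht : 0 < t := interior_subset ht
  have : v * u * (r - 1) ≤ 0 := mul_nonpos_of_nonneg_of_nonpos (by positivity) (by linarith)
  exact mul_nonpos_of_nonpos_of_nonneg (mul_nonpos_of_nonpos_of_nonneg this (by positivity))
    (by positivity)

theorem integral_mul_add_one_sub_mul_rpow {a b p : ℝ} (hab : a ≠ b)
    (h : -1 < p ∨ p ≠ -1 ∧ (0 : ℝ) ∉ uIcc b a) :
    ∫ u in (0 : ℝ)..1, (u * a + (1 - u) * b) ^ p
      = (a ^ (p + 1) - b ^ (p + 1)) / ((p + 1) * (a - b)) := by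
  have hlin : ∀ u : ℝ, u * a + (1 - u) * b = (a - b) * u + b := fun u => by ring
  simp_rw [hlin]
  rw [intervalIntegral.integral_comp_mul_add (· ^ p) (sub_ne_zero.2 hab), mul_zero, zero_add,
    mul_one, sub_add_cancel, integral_rpow h, smul_eq_mul, inv_mul_eq_div, div_div]

/-- `powerMean r u s t` is `M_r(u; s, t)`. For `r ≤ 0` it vanishes as soon as `s` or `t` does; the
formula would not give this for `r < 0`, since `0 ^ r = 0` in Lean. -/
noncomputable def powerMean (r u s t : ℝ) : ℝ :=
  if r ≤ 0 ∧ (s = 0 ∨ t = 0) then 0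
  else if r = 0 then s ^ u * t ^ (1 - u)
  else (u * s ^ r + (1 - u) * t ^ r) ^ r⁻¹

section powerMean

variable {r u s t : ℝ}

theorem powerMean_of_nonpos_of_zero (hr : r ≤ 0) (h : s = 0 ∨ t = 0) : powerMean r u s t = 0 :=
  if_pos ⟨hr, h⟩

theorem powerMean_zero_of_pos (hs : 0 < s) (ht : 0 < t) :
    powerMean 0 u s t = s ^ u * t ^ (1 - u) := by
  simp [powerMean, hs.ne', ht.ne']

theorem powerMean_of_ne_zero (hr : r ≠ 0) (h : 0 < r ∨ 0 < s ∧ 0 < t) :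
    powerMean r u s t = (u * s ^ r + (1 - u) * t ^ r) ^ r⁻¹ := by
  rw [powerMean, if_neg, if_neg hr]
  rintro ⟨hr', hst⟩
  rcases h with h | ⟨hs, ht⟩
  · linarith
  · rcases hst with rfl | rfl <;> linarith

theorem powerMean_comm : powerMean r u s t = powerMean r (1 - u) t s := by
  simp only [powerMean, sub_sub_cancel, or_comm, mul_comm (s ^ u), add_comm (u * s ^ r)]

theorem powerMean_self (hs : 0 ≤ s) : powerMean r u s s = s := by
  rcases hs.eq_or_lt with rfl | hs
  · rcases le_or_gt r 0 with hr | hr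
    · exact powerMean_of_nonpos_of_zero hr (Or.inl rfl)
    · simp [powerMean_of_ne_zero hr.ne' (Or.inl hr), zero_rpow hr.ne', hr.ne']
  · rcases eq_or_ne r 0 with rfl | hr
    · rw [powerMean_zero_of_pos hs hs, ← rpow_add hs]
      simp
    · rw [powerMean_of_ne_zero hr (Or.inr ⟨hs, hs⟩), ← add_mul, add_sub_cancel, one_mul,
        ← rpow_mul hs.le, mul_inv_cancel₀ hr, rpow_one]

theorem powerMean_nonneg (hu : u ∈ Icc 0 1) (hs : 0 ≤ s) (ht : 0 ≤ t) :
    0 ≤ powerMean r u s t := by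
  have := hu.1
  have := sub_nonneg.2 hu.2
  unfold powerMean
  split_ifs
  · rfl
  · positivity
  · exact rpow_nonneg (by positivity) _

theorem powerMean_mul {c : ℝ} (hu : u ∈ Icc 0 1) (hc : 0 < c) (hs : 0 < s) (ht : 0 < t) :
    powerMean r u (c * s) (c * t) = c * powerMean r u s t := by
  have := hu.1
  have := sub_nonneg.2 hu.2
  rcases eq_or_ne r 0 with rfl | hr
  · rw [powerMean_zero_of_pos (by positivity) (by positivity), powerMean_zero_of_pos hs ht,
      mul_rpow hc.le hs.le, mul_rpow hc.le ht.le]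
    calc c ^ u * s ^ u * (c ^ (1 - u) * t ^ (1 - u))
        = c ^ (u + (1 - u)) * (s ^ u * t ^ (1 - u)) := by rw [rpow_add hc]; ring
      _ = _ := by simp
  · rw [powerMean_of_ne_zero hr (Or.inr ⟨by positivity, by positivity⟩),
      powerMean_of_ne_zero hr (Or.inr ⟨hs, ht⟩), mul_rpow hc.le hs.le, mul_rpow hc.le ht.le,
      show u * (c ^ r * s ^ r) + (1 - u) * (c ^ r * t ^ r)
        = c ^ r * (u * s ^ r + (1 - u) * t ^ r) by ring,
      mul_rpow (by positivity) (by positivity), ← rpow_mul hc.le, mul_inv_cancel₀ hr, rpow_one]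

theorem powerMean_le_of_neg (hr : r < 0) (hu : 0 < u) (hu₁ : u ≤ 1) (hs : 0 ≤ s) (ht : 0 ≤ t) :
    powerMean r u s t ≤ u ^ r⁻¹ * s := by
  rcases hs.eq_or_lt with rfl | hs
  · rw [powerMean_of_nonpos_of_zero hr.le (Or.inl rfl), mul_zero]
  rcases ht.eq_or_lt with rfl | ht
  · rw [powerMean_of_nonpos_of_zero hr.le (Or.inr rfl)]
    positivity
  rw [powerMean_of_ne_zero hr.ne (Or.inr ⟨hs, ht⟩)]
  calc (u * s ^ r + (1 - u) * t ^ r) ^ r⁻¹ ≤ (u * s ^ r) ^ r⁻¹ :=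
        rpow_le_rpow_of_nonpos (by positivity)
          (le_add_of_nonneg_right (mul_nonneg (sub_nonneg.2 hu₁) (by positivity)))
          (inv_nonpos.2 hr.le)
    _ = u ^ r⁻¹ * s := by
        rw [mul_rpow hu.le (by positivity), ← rpow_mul hs.le, mul_inv_cancel₀ hr.ne, rpow_one]

theorem concaveOn_powerMean_one (hr : r ≤ 1) (hu : u ∈ Ioo 0 1) :
    ConcaveOn ℝ (Ioi 0) (powerMean r u 1) := by
  rcases eq_or_ne r 0 with rfl | hr₀
  · refine ((concaveOn_rpow (sub_nonneg.2 hu.2.le) (sub_le_self 1 hu.1.le)).subset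
      (Ioi_subset_Ici le_rfl) (convex_Ioi 0)).congr fun t ht => ?_
    simp [powerMean_zero_of_pos one_pos ht]
  · refine (concaveOn_add_mul_rpow_rpow_inv hu.1 (sub_pos.2 hu.2) hr hr₀).congr fun t ht => ?_
    simp [powerMean_of_ne_zero hr₀ (Or.inr ⟨one_pos, ht⟩)]

theorem concaveOn_powerMean_Ioi (hr : r ≤ 1) (hu : u ∈ Ioo 0 1) :
    ConcaveOn ℝ (Ioi 0 ×ˢ Ioi 0) (fun p : ℝ × ℝ => powerMean r u p.1 p.2) := by
  refine (concaveOn_powerMean_one hr hu).perspective.congr fun p ⟨hs, ht⟩ => ?_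
  simp only
  rw [← powerMean_mul (Ioo_subset_Icc_self hu) hs one_pos (div_pos ht hs), mul_one,
    mul_div_cancel₀ _ hs.ne']

theorem continuousOn_powerMean_of_neg (hr : r < 0) (hu : u ∈ Ioo 0 1) :
    ContinuousOn (fun p : ℝ × ℝ => powerMean r u p.1 p.2) (Ici 0 ×ˢ Ici 0) := by
  have := hu.1
  have := sub_pos.2 hu.2
  rintro ⟨s, t⟩ ⟨hs, ht⟩
  simp only [mem_Ici] at hs ht
  by_cases hst : s = 0 ∨ t = 0
  · rw [ContinuousWithinAt, powerMean_of_nonpos_of_zero hr.le hst]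
    refine squeeze_zero' (eventually_nhdsWithin_of_forall fun q ⟨hq₁, hq₂⟩ =>
      powerMean_nonneg (Ioo_subset_Icc_self hu) hq₁ hq₂)
      (eventually_nhdsWithin_of_forall fun q ⟨hq₁, hq₂⟩ => le_min
        (powerMean_le_of_neg hr hu.1 hu.2.le hq₁ hq₂)
        (powerMean_comm.trans_le
          (powerMean_le_of_neg hr (sub_pos.2 hu.2) (sub_le_self 1 hu.1.le) hq₂ hq₁))) ?_
    have : Continuous fun q : ℝ × ℝ => min (u ^ r⁻¹ * q.1) ((1 - u) ^ r⁻¹ * q.2) := by fun_prop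
    convert this.continuousWithinAt.tendsto using 2
    rcases hst with rfl | rfl <;> simp only [mul_zero]
    · exact (min_eq_left (by positivity)).symm
    · exact (min_eq_right (by positivity)).symm
  · obtain ⟨hs₀, ht₀⟩ := not_or.1 hst
    have hs : 0 < s := hs.lt_of_ne' hs₀
    have ht : 0 < t := ht.lt_of_ne' ht₀
    have hformula : (fun q : ℝ × ℝ => (u * q.1 ^ r + (1 - u) * q.2 ^ r) ^ r⁻¹)
        =ᶠ[𝓝 (s, t)] fun q => powerMean r u q.1 q.2 := by
      filter_upwards [(isOpen_Ioi.prod isOpen_Ioi).mem_nhds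
        (show (s, t) ∈ Ioi 0 ×ˢ Ioi 0 from ⟨hs, ht⟩)] with q ⟨hq₁, hq₂⟩
      exact (powerMean_of_ne_zero hr.ne (Or.inr ⟨hq₁, hq₂⟩)).symm
    refine (ContinuousAt.congr ?_ hformula).continuousWithinAt
    exact (((continuousAt_fst.rpow_const (Or.inl hs.ne')).const_mul _).add
      ((continuousAt_snd.rpow_const (Or.inl ht.ne')).const_mul _)).rpow_const
      (Or.inl (ne_of_gt (by positivity : 0 < u * s ^ r + (1 - u) * t ^ r)))

theorem continuousOn_powerMean (hu : u ∈ Ioo 0 1) :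
    ContinuousOn (fun p : ℝ × ℝ => powerMean r u p.1 p.2) (Ici 0 ×ˢ Ici 0) := by
  rcases lt_trichotomy r 0 with hr | rfl | hr
  · exact continuousOn_powerMean_of_neg hr hu
  · have : Continuous fun p : ℝ × ℝ => p.1 ^ u * p.2 ^ (1 - u) :=
      (continuous_fst.rpow_const fun _ => Or.inr hu.1.le).mul
        (continuous_snd.rpow_const fun _ => Or.inr (sub_nonneg.2 hu.2.le))
    refine this.continuousOn.congr fun p ⟨hs, ht⟩ => ?_
    simp only
    rcases (mem_Ici.1 hs).eq_or_lt with hs | hs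
    · rw [powerMean_of_nonpos_of_zero le_rfl (Or.inl hs.symm), ← hs, zero_rpow hu.1.ne',
        zero_mul]
    rcases (mem_Ici.1 ht).eq_or_lt with ht | ht
    · rw [powerMean_of_nonpos_of_zero le_rfl (Or.inr ht.symm), ← ht,
        zero_rpow (sub_pos.2 hu.2).ne', mul_zero]
    exact powerMean_zero_of_pos hs ht
  · have : Continuous fun p : ℝ × ℝ => (u * p.1 ^ r + (1 - u) * p.2 ^ r) ^ r⁻¹ :=
      (((continuous_fst.rpow_const fun _ => Or.inr hr.le).const_mul _).add
        ((continuous_snd.rpow_const fun _ => Or.inr hr.le).const_mul _)).rpow_const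
        fun _ => Or.inr (inv_nonneg.2 hr.le)
    exact (this.congr fun p => (powerMean_of_ne_zero hr.ne' (Or.inl hr)).symm).continuousOn

theorem concaveOn_powerMean (hr : r ≤ 1) (hu : u ∈ Ioo 0 1) :
    ConcaveOn ℝ (Ici 0 ×ˢ Ici 0) (fun p : ℝ × ℝ => powerMean r u p.1 p.2) := by
  refine ConcaveOn.of_interior ((convex_Ici 0).prod (convex_Ici 0)) ?_ ?_
    (continuousOn_powerMean hu) <;> simp only [interior_prod_eq, interior_Ici]
  · exact ⟨(1, 1), mem_Ioi.2 one_pos, mem_Ioi.2 one_pos⟩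
  · exact concaveOn_powerMean_Ioi hr hu

theorem intervalIntegrable_powerMean (hs : 0 ≤ s) (ht : 0 ≤ t) :
    IntervalIntegrable (fun u => powerMean r u s t) volume 0 1 := by
  by_cases hz : r ≤ 0 ∧ (s = 0 ∨ t = 0)
  · simp_rw [powerMean_of_nonpos_of_zero hz.1 hz.2]
    exact intervalIntegrable_const
  have hpos : 0 < r ∨ 0 < s ∧ 0 < t := by
    rcases lt_or_ge 0 r with hr | hr
    · exact Or.inl hr
    obtain ⟨hs₀, ht₀⟩ := not_or.1 fun h => hz ⟨hr, h⟩
    exact Or.inr ⟨hs.lt_of_ne' hs₀, ht.lt_of_ne' ht₀⟩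
  rcases eq_or_ne r 0 with rfl | hr
  · obtain ⟨hs, ht⟩ := hpos.resolve_left (lt_irrefl 0)
    simp_rw [powerMean_zero_of_pos hs ht]
    exact Continuous.intervalIntegrable (by fun_prop (disch := positivity)) 0 1
  · simp_rw [powerMean_of_ne_zero hr hpos]
    refine ContinuousOn.intervalIntegrable ?_
    rw [uIcc_of_le zero_le_one]
    refine ContinuousOn.rpow_const (by fun_prop) fun u hu => ?_
    rcases hpos with hr | ⟨hs, ht⟩
    · exact Or.inr (inv_nonneg.2 hr.le)
    · exact Or.inl (ne_of_gt ((convex_Ioi 0) (rpow_pos_of_pos hs r) (rpow_pos_of_pos ht r) hu.1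
        (sub_nonneg.2 hu.2) (add_sub_cancel _ _)))

theorem integral_powerMean_zero (hs : 0 < s) (ht : 0 < t) (hst : s ≠ t) :
    ∫ u in (0 : ℝ)..1, powerMean 0 u s t = (s - t) / (log s - log t) := by
  have hlog : log s - log t ≠ 0 := sub_ne_zero.2 fun h => hst (log_injOn_pos hs ht h)
  have hexp : ∀ u, powerMean 0 u s t = exp ((log s - log t) * u + log t) := fun u => by
    rw [powerMean_zero_of_pos hs ht, rpow_def_of_pos hs, rpow_def_of_pos ht, ← exp_add]
    ring_nf
  simp_rw [hexp]
  rw [intervalIntegral.integral_comp_mul_add exp hlog, integral_exp, mul_zero, zero_add, mul_one,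
    sub_add_cancel, exp_log hs, exp_log ht, smul_eq_mul, inv_mul_eq_div]

theorem integral_powerMean_sub_one {m : ℝ} (hm₀ : m ≠ 0) (hm₁ : m ≠ 1) (hs : 0 ≤ s) (ht : 0 ≤ t)
    (hst : s ≠ t) (h : 1 < m ∨ 0 < s ∧ 0 < t) :
    ∫ u in (0 : ℝ)..1, powerMean (m - 1) u s t
      = (m - 1) / m * (s ^ m - t ^ m) / (s ^ (m - 1) - t ^ (m - 1)) := by
  have hr : m - 1 ≠ 0 := sub_ne_zero.2 hm₁
  have hne : s ^ (m - 1) ≠ t ^ (m - 1) := fun h => hst (rpow_left_injOn hr hs ht h)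
  simp_rw [powerMean_of_ne_zero hr (h.imp_left sub_pos.2)]
  rw [integral_mul_add_one_sub_mul_rpow hne ?_]
  · have hpow : ∀ x : ℝ, 0 ≤ x → (x ^ (m - 1)) ^ ((m - 1)⁻¹ + 1) = x ^ m := fun x hx => by
      rw [← rpow_mul hx]
      congr 1
      field_simp
      ring
    rw [hpow s hs, hpow t ht, show (m - 1)⁻¹ + 1 = m / (m - 1) by field_simp; ring]
    have : s ^ (m - 1) - t ^ (m - 1) ≠ 0 := sub_ne_zero.2 hne
    field_simp
  rcases h with h | ⟨hs, ht⟩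
  · exact Or.inl (by have := inv_pos.2 (sub_pos.2 h); linarith)
  · refine Or.inr ⟨fun h => hm₀ ?_, notMem_uIcc_of_lt (rpow_pos_of_pos ht _) (rpow_pos_of_pos hs _)⟩
    rw [inv_eq_iff_eq_inv, inv_neg, inv_one] at h
    linarith

theorem theta_eq_integral_powerMean {m : ℝ} (hm : m ≠ 0) (hs : 0 ≤ s) (ht : 0 ≤ t) :
    theta m s t = ∫ u in (0 : ℝ)..1, powerMean (m - 1) u s t := by
  rcases eq_or_ne s t with rfl | hst
  · simp [powerMean_self hs, theta]
  by_cases hz : s = 0 ∨ t = 0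
  · by_cases hm₁ : 1 < m
    · rw [integral_powerMean_sub_one hm hm₁.ne' hs ht hst (Or.inl hm₁), theta, if_neg hst,
        if_pos hz, if_pos hm₁]
      have hm₁' : m - 1 ≠ 0 := sub_ne_zero.2 hm₁.ne'
      rcases hz with rfl | rfl
      · have ht : 0 < t := ht.lt_of_ne hst
        have := (rpow_pos_of_pos ht m).ne'
        rw [zero_rpow hm, zero_rpow hm₁', rpow_sub_one ht.ne', zero_add, zero_sub, zero_sub,
          mul_neg, neg_div_neg_eq, mul_div_assoc, div_div_cancel₀ this]
      · have hs : 0 < s := hs.lt_of_ne hst.symm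
        have := (rpow_pos_of_pos hs m).ne'
        rw [zero_rpow hm, zero_rpow hm₁', rpow_sub_one hs.ne', add_zero, sub_zero, sub_zero,
          mul_div_assoc, div_div_cancel₀ this]
    · simp [powerMean_of_nonpos_of_zero (by linarith : m - 1 ≤ 0) hz, theta, hst, hz, hm₁]
  · obtain ⟨hs₀, ht₀⟩ := not_or.1 hz
    rcases eq_or_ne m 1 with rfl | hm₁
    · rw [sub_self, integral_powerMean_zero (hs.lt_of_ne' hs₀) (ht.lt_of_ne' ht₀) hst]
      simp [theta, hst, hs₀, ht₀]
    · rw [integral_powerMean_sub_one hm hm₁ hs ht hst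
        (Or.inr ⟨hs.lt_of_ne' hs₀, ht.lt_of_ne' ht₀⟩)]
      simp [theta, hst, hs₀, ht₀, hm₁]

end powerMean

/-- Concavity of the `m`-mean on `[0,∞)²` for `0 < m ≤ 2`. -/
theorem theta_concave (m : ℝ) (hm0 : 0 < m) (hm2 : m ≤ 2) :
    ConcaveOn ℝ (Set.Ici (0:ℝ) ×ˢ Set.Ici (0:ℝ)) (fun p : ℝ × ℝ => theta m p.1 p.2) := by
  have hmean : ∀ᵐ u ∂(volume.restrict (Ioc (0 : ℝ) 1)),
      ConcaveOn ℝ (Ici 0 ×ˢ Ici 0) (fun p : ℝ × ℝ => powerMean (m - 1) u p.1 p.2) := by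
    rw [← Measure.restrict_congr_set Ioo_ae_eq_Ioc]
    filter_upwards [ae_restrict_mem measurableSet_Ioo] with u hu
    exact concaveOn_powerMean (by linarith) hu
  refine (integral_concaveOn_of_integrand_ae ((convex_Ici 0).prod (convex_Ici 0)) hmean
    fun p hp => (intervalIntegrable_powerMean hp.1 hp.2).1).congr fun p hp => ?_
  rw [theta_eq_integral_powerMean hm0.ne' hp.1 hp.2, intervalIntegral.integral_of_le zero_le_one]
end

section
/- If 0 < m₁ < m₂ ≤ 2 then θ_{m₁}(s,t) < θ_{m₂}(s,t) for all s, t > 0 with s ≠ t. -/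
open Set Real

section

variable {𝕜 : Type*} [Field 𝕜] [LinearOrder 𝕜] [IsStrictOrderedRing 𝕜] {φ : 𝕜 → 𝕜}

lemma StrictConvexOn.univ_of_even (hconv : StrictConvexOn 𝕜 (Ici 0) φ) (heven : ∀ x, φ (-x) = φ x)
    (hmono : StrictMonoOn φ (Ici 0)) : StrictConvexOn 𝕜 univ φ := by
  have habs : ∀ x, φ |x| = φ x := fun x ↦ by rcases abs_choice x with h | h <;> simp [h, heven]
  refine ⟨convex_univ, fun x _ y _ hxy a b ha hb hab ↦ ?_⟩
  simp only [smul_eq_mul, ← habs x, ← habs y, ← habs (a * x + b * y)]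
  have htri : |a * x + b * y| ≤ a * |x| + b * |y| := by
    simpa [abs_mul, abs_of_pos ha, abs_of_pos hb] using abs_add_le (a * x) (b * y)
  by_cases hxy' : |x| = |y|
  · have hyx : y = -x := neg_eq_iff_eq_neg.mp ((abs_eq_abs.mp hxy').resolve_left hxy).symm
    have hx : x ≠ 0 := by rintro rfl; simp_all
    have hlt : |a * x + b * y| < |x| := by
      rw [hyx, show a * x + b * -x = (a - b) * x by ring, abs_mul]
      exact mul_lt_of_lt_one_left (abs_pos.mpr hx) (abs_lt.mpr ⟨by linarith, by linarith⟩)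
    rw [← hxy', ← add_mul, hab, one_mul]
    exact hmono (mem_Ici.mpr (abs_nonneg _)) (mem_Ici.mpr (abs_nonneg _)) hlt
  · calc φ |a * x + b * y| ≤ φ (a * |x| + b * |y|) :=
          hmono.monotoneOn (mem_Ici.mpr (abs_nonneg _)) (mem_Ici.mpr (by positivity)) htri
      _ < a * φ |x| + b * φ |y| := hconv.2 (abs_nonneg x) (abs_nonneg y) hxy' ha hb hab

lemma StrictConvexOn.add_sub_lt_add_sub (hφ : StrictConvexOn 𝕜 univ φ) {h x y : 𝕜} (hh : 0 < h)
    (hxy : x < y) : φ (x + h) - φ x < φ (y + h) - φ y := by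
  have hx : (φ (x + h) - φ x) / h < (φ (y + h) - φ x) / (y + h - x) := by
    simpa using hφ.secant_strict_mono (a := x) trivial trivial trivial (by linarith) (by linarith)
      (add_lt_add_left hxy h)
  have hy : (φ (y + h) - φ x) / (y + h - x) < (φ (y + h) - φ y) / h := by
    have := hφ.secant_strict_mono (a := y + h) trivial trivial trivial (by linarith) (by linarith) hxy
    rwa [← neg_div_neg_eq (φ x - _), neg_sub, neg_sub, ← neg_div_neg_eq (φ y - _), neg_sub,
      neg_sub, add_sub_cancel_left] at this
  exact (div_lt_div_iff_of_pos_right hh).mp (hx.trans hy)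

end

namespace Real

noncomputable def sinhc (x : ℝ) : ℝ := if x = 0 then 1 else sinh x / x

@[simp]
lemma sinhc_zero : sinhc 0 = 1 := if_pos rfl

lemma sinhc_of_ne_zero {x : ℝ} (hx : x ≠ 0) : sinhc x = sinh x / x := if_neg hx

@[simp]
lemma sinhc_neg (x : ℝ) : sinhc (-x) = sinhc x := by
  by_cases hx : x = 0
  · simp [hx]
  · rw [sinhc_of_ne_zero hx, sinhc_of_ne_zero (neg_ne_zero.mpr hx), sinh_neg, neg_div_neg_eq]

lemma sinhc_eq_dslope : sinhc = dslope sinh 0 := by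
  ext
  simp [dslope, Function.update_apply, sinhc, slope, div_eq_inv_mul]

lemma continuous_sinhc : Continuous sinhc := by
  refine continuous_iff_continuousAt.mpr fun x ↦ ?_
  rw [sinhc_eq_dslope]
  by_cases hx : x = 0
  · simp [hx]
  · rw [continuousAt_dslope_of_ne hx]
    fun_prop

lemma sinhc_pos (x : ℝ) : 0 < sinhc x := by
  rcases lt_trichotomy x 0 with hx | rfl | hx
  · rw [sinhc_of_ne_zero hx.ne]
    exact div_pos_of_neg_of_neg (sinh_neg_iff.mpr hx) hx
  · simp
  · rw [sinhc_of_ne_zero hx.ne']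
    exact div_pos (sinh_pos_iff.mpr hx) hx

lemma strictConvexOn_sinh_Ici : StrictConvexOn ℝ (Ici 0) sinh := by
  refine StrictMonoOn.strictConvexOn_of_deriv (convex_Ici 0) continuous_sinh.continuousOn ?_
  rw [deriv_sinh, interior_Ici]
  exact cosh_strictMonoOn.mono Ioi_subset_Ici_self

lemma strictMonoOn_sinhc : StrictMonoOn sinhc (Ici 0) := by
  intro x hx y hy hxy
  have hy0 : 0 < y := lt_of_le_of_lt hx hxy
  rcases (mem_Ici.mp hx).eq_or_lt with rfl | hx0
  · rw [sinhc_zero, sinhc_of_ne_zero hy0.ne', one_lt_div hy0]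
    exact self_lt_sinh_iff.mpr hy0
  · -- `sinhc x` is the slope of `sinh` between `0` and `x`
    simpa [sinhc_of_ne_zero hx0.ne', sinhc_of_ne_zero hy0.ne'] using
      strictConvexOn_sinh_Ici.secant_strict_mono self_mem_Ici hx hy hx0.ne' hy0.ne' hxy

lemma hasDerivAt_log_sinhc {x : ℝ} (hx : x ≠ 0) :
    HasDerivAt (fun y ↦ log (sinhc y)) (cosh x / sinh x - x⁻¹) x := by
  have hsinh : HasDerivAt (fun y ↦ log (sinh y) - log y) (cosh x / sinh x - x⁻¹) x :=
    ((hasDerivAt_sinh x).log (sinh_ne_zero.mpr hx)).sub (hasDerivAt_log hx)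
  refine hsinh.congr_of_eventuallyEq ?_
  filter_upwards [eventually_ne_nhds hx] with y hy
  rw [sinhc_of_ne_zero hy, log_div (sinh_ne_zero.mpr hy) hy]

lemma hasDerivAt_cosh_div_sinh_sub_inv {x : ℝ} (hx : x ≠ 0) :
    HasDerivAt (fun y ↦ cosh y / sinh y - y⁻¹) ((x ^ 2)⁻¹ - (sinh x ^ 2)⁻¹) x := by
  have hs : sinh x ≠ 0 := sinh_ne_zero.mpr hx
  refine (((hasDerivAt_cosh x).div (hasDerivAt_sinh x) hs).sub (hasDerivAt_inv hx)).congr_deriv ?_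
  rw [← sq, ← sq, cosh_sq]
  field_simp
  ring

lemma strictMonoOn_cosh_div_sinh_sub_inv : StrictMonoOn (fun x ↦ cosh x / sinh x - x⁻¹) (Ioi 0) := by
  refine strictMonoOn_of_hasDerivWithinAt_pos (convex_Ioi 0)
    (fun x hx ↦ (hasDerivAt_cosh_div_sinh_sub_inv (ne_of_gt hx)).continuousAt.continuousWithinAt)
    (fun x hx ↦ (hasDerivAt_cosh_div_sinh_sub_inv (ne_of_gt (interior_subset hx))).hasDerivWithinAt)
    fun x hx ↦ ?_
  replace hx : 0 < x := by rwa [interior_Ioi] at hx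
  have hxs : x < sinh x := self_lt_sinh_iff.mpr hx
  rw [sub_pos]
  gcongr

lemma strictConvexOn_log_sinhc_Ici : StrictConvexOn ℝ (Ici 0) (fun x ↦ log (sinhc x)) := by
  refine StrictMonoOn.strictConvexOn_of_deriv (convex_Ici 0)
    (continuous_sinhc.continuousOn.log fun x _ ↦ (sinhc_pos x).ne') ?_
  rw [interior_Ici]
  intro x hx y hy hxy
  rw [(hasDerivAt_log_sinhc (ne_of_gt hx)).deriv, (hasDerivAt_log_sinhc (ne_of_gt hy)).deriv]
  exact strictMonoOn_cosh_div_sinh_sub_inv hx hy hxy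

lemma strictConvexOn_log_sinhc : StrictConvexOn ℝ univ (fun x ↦ log (sinhc x)) :=
  strictConvexOn_log_sinhc_Ici.univ_of_even (fun x ↦ by simp)
    fun _ hx _ hy hxy ↦ log_lt_log (sinhc_pos _) (strictMonoOn_sinhc hx hy hxy)

lemma strictMono_sinhc_mul_div_sinhc_mul_sub_one {b : ℝ} (hb : b ≠ 0) :
    StrictMono fun m ↦ sinhc (b * m) / sinhc (b * (m - 1)) := by
  have hsym : ∀ y, sinhc (b * y) = sinhc (|b| * y) := fun y ↦ by
    rcases abs_choice b with h | h <;> simp [h]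
  intro m₁ m₂ hm
  simp only [hsym]
  have hlog : ∀ m, sinhc (|b| * m) / sinhc (|b| * (m - 1)) =
      exp (log (sinhc (|b| * (m - 1) + |b|)) - log (sinhc (|b| * (m - 1)))) := fun m ↦ by
    rw [exp_sub, exp_log (sinhc_pos _), exp_log (sinhc_pos _), mul_sub_one, sub_add_cancel]
  rw [hlog, hlog, exp_lt_exp]
  exact strictConvexOn_log_sinhc.add_sub_lt_add_sub (abs_pos.mpr hb)
    (mul_lt_mul_of_pos_left (sub_lt_sub_right hm 1) (abs_pos.mpr hb))

lemma exp_add_rpow_sub_exp_sub_rpow (a b r : ℝ) :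
    exp (a + b) ^ r - exp (a - b) ^ r = 2 * exp (a * r) * sinh (b * r) := by
  rw [← exp_mul, ← exp_mul, sinh_eq, add_mul, sub_mul, exp_add, exp_sub, exp_neg]
  field_simp

end Real

lemma theta_exp_add_exp_sub {a b m : ℝ} (hb : b ≠ 0) (hm : m ≠ 0) :
    theta m (exp (a + b)) (exp (a - b)) = exp a * (sinhc (b * m) / sinhc (b * (m - 1))) := by
  have hne : exp (a + b) ≠ exp (a - b) := by
    rw [Ne, exp_eq_exp]
    contrapose! hb
    linarith
  simp only [theta, hne, exp_ne_zero, or_self, if_false, log_exp]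
  split_ifs with hm1
  · subst hm1
    have := exp_add_rpow_sub_exp_sub_rpow a b 1
    simp only [rpow_one, mul_one] at this
    rw [this, sub_self, mul_zero, sinhc_zero, sinhc_of_ne_zero (by simpa using hb),
      show a + b - (a - b) = 2 * b by ring]
    field_simp
  · rw [exp_add_rpow_sub_exp_sub_rpow, exp_add_rpow_sub_exp_sub_rpow,
      sinhc_of_ne_zero (mul_ne_zero hb hm), sinhc_of_ne_zero (mul_ne_zero hb (sub_ne_zero.mpr hm1)),
      show a * m = a * (m - 1) + a by ring, exp_add]
    have := sinh_ne_zero.mpr (mul_ne_zero hb (sub_ne_zero.mpr hm1))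
    field_simp

theorem theta_strictMono_in_m_general (m₁ m₂ s t : ℝ) (hm₁ : 0 < m₁) (h12 : m₁ < m₂)
    (hs : 0 < s) (ht : 0 < t) (hst : s ≠ t) :
    theta m₁ s t < theta m₂ s t := by
  obtain ⟨a, b, hb, rfl, rfl⟩ : ∃ a b : ℝ, b ≠ 0 ∧ s = exp (a + b) ∧ t = exp (a - b) := by
    refine ⟨(log s + log t) / 2, (log s - log t) / 2, ?_, ?_, ?_⟩
    · exact div_ne_zero (sub_ne_zero.mpr fun h ↦ hst (log_injOn_pos hs ht h)) two_ne_zero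
    · rw [show (log s + log t) / 2 + (log s - log t) / 2 = log s by ring, exp_log hs]
    · rw [show (log s + log t) / 2 - (log s - log t) / 2 = log t by ring, exp_log ht]
  rw [theta_exp_add_exp_sub hb hm₁.ne', theta_exp_add_exp_sub hb (hm₁.trans h12).ne']
  exact mul_lt_mul_of_pos_left (strictMono_sinhc_mul_div_sinhc_mul_sub_one hb h12) (exp_pos a)

/-- Strict monotonicity in `m` of the `m`-mean. -/
theorem theta_strictMono_in_m (m₁ m₂ s t : ℝ) (hm₁ : 0 < m₁) (h12 : m₁ < m₂) (hm₂ : m₂ ≤ 2)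
    (hs : 0 < s) (ht : 0 < t) (hst : s ≠ t) :
    theta m₁ s t < theta m₂ s t :=
  theta_strictMono_in_m_general m₁ m₂ s t hm₁ h12 hs ht hst
end
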